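/- arXiv:1507.02946 — 4 statements merged into one kernel-verified Lean document; each statement's English description precedes it below -/
import Mathlib

section
/- Let R be an integral domain of characteristic zero and let F ∈ ME_n(R) have degree ≤ d and affine part identity. Then F is a strong Keller map if and only if det(Jac(F)) = 1. -/
open MvPolynomial

noncomputable section

/-- The total degree `|α|` of a multi-index `α`. -/
def mdeg {n : ℕ} (α : Fin n →₀ ℕ) : ℕ := α.sum fun _ e => e

/-- The determinant of the Jacobian matrix `(∂F_i/∂x_j)` of a polynomial endomorphism. -/
def jacDet {n : ℕ} {R : Type*} [CommRing R] (F : Fin n → MvPolynomial (Fin n) R) :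
    MvPolynomial (Fin n) R :=
  (Matrix.of fun i j => MvPolynomial.pderiv j (F i)).det

/-- `F` has degree at most `d`. -/
def DegLE {n : ℕ} {R : Type*} [CommRing R] (F : Fin n → MvPolynomial (Fin n) R) (d : ℕ) : Prop :=
  ∀ i, (F i).totalDegree ≤ d

/-- `F` has affine part the identity: `F_i = x_i + (terms of degree ≥ 2)`. -/
def AffinePartId {n : ℕ} {R : Type*} [CommRing R] (F : Fin n → MvPolynomial (Fin n) R) : Prop :=
  ∀ (i : Fin n) (α : Fin n →₀ ℕ), mdeg α ≤ 1 →
    MvPolynomial.coeff α (F i) = MvPolynomial.coeff α (MvPolynomial.X i : MvPolynomial (Fin n) R)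

/-- `F` is an invertible polynomial map: there is `G` with `F∘G = G∘F = id`. -/
def IsInvertible {n : ℕ} {R : Type*} [CommRing R] (F : Fin n → MvPolynomial (Fin n) R) : Prop :=
  ∃ G : Fin n → MvPolynomial (Fin n) R,
    (∀ i, MvPolynomial.bind₁ G (F i) = MvPolynomial.X i) ∧
    (∀ i, MvPolynomial.bind₁ F (G i) = MvPolynomial.X i)

/-- Index type of the universal coefficients `c_{i,α}`, `1 ≤ i ≤ n`, `2 ≤ |α| ≤ d`. -/
abbrev Idx (n d : ℕ) : Type := Fin n × {α : Fin n →₀ ℕ // 2 ≤ mdeg α ∧ mdeg α ≤ d}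

/-- The finite set of multi-indices `α` with `2 ≤ |α| ≤ d`. -/
def midxSet (n d : ℕ) : Finset (Fin n →₀ ℕ) :=
  (Finset.Iic (Finsupp.equivFunOnFinite.symm fun _ : Fin n => d)).filter
    fun α => 2 ≤ mdeg α ∧ mdeg α ≤ d

/-- The universal degree-`d` endomorphism with affine part identity, written over
`C_{ℤ,d} = ℤ[c_{i,α}]`. -/
def univFZ (n d : ℕ) : Fin n → MvPolynomial (Fin n) (MvPolynomial (Idx n d) ℤ) :=
  fun i => MvPolynomial.X i +
    ∑ α ∈ (midxSet n d).attach,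
      MvPolynomial.monomial (α : Fin n →₀ ℕ)
        (MvPolynomial.X (⟨i, ⟨α.1, by
          have h := α.2
          simp only [midxSet, Finset.mem_filter] at h
          exact h.2⟩⟩ : Idx n d))

/-- The coefficients `E_β ∈ C_{ℤ,d}` of `det(Jac(F[d])) − 1 = Σ_β E_β x^β`. -/
def Ecoef (n d : ℕ) (β : Fin n →₀ ℕ) : MvPolynomial (Idx n d) ℤ :=
  MvPolynomial.coeff β (jacDet (univFZ n d) - 1)

/-- The inclusion `C_{ℤ,d} → C_{ℚ,d}`. -/
def toQ (n d : ℕ) : MvPolynomial (Idx n d) ℤ →+* MvPolynomial (Idx n d) ℚ :=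
  MvPolynomial.map (Int.castRingHom ℚ)

/-- The ideal `I_ℚ^d ⊆ C_{ℚ,d}` generated by the coefficients `E_β`. -/
def Iqd (n d : ℕ) : Ideal (MvPolynomial (Idx n d) ℚ) :=
  Ideal.span (Set.range fun β : Fin n →₀ ℕ => toQ n d (Ecoef n d β))

/-- `J_ℤ^d := rad(I_ℚ^d) ∩ C_{ℤ,d}` as the contraction of the radical to `C_{ℤ,d}`. -/
def Jzd (n d : ℕ) : Ideal (MvPolynomial (Idx n d) ℤ) :=
  Ideal.comap (toQ n d) (Iqd n d).radical

/-- `ψ_F : C_{ℤ,d} → R`, evaluating `c_{i,α}` at the coefficient of `x^α` in `F_i`. -/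
def psi {n : ℕ} (d : ℕ) {R : Type*} [CommRing R] (F : Fin n → MvPolynomial (Fin n) R) :
    MvPolynomial (Idx n d) ℤ →+* R :=
  MvPolynomial.eval₂Hom (Int.castRingHom R) fun v => MvPolynomial.coeff v.2.1 (F v.1)

/-- `F` is a strong Keller map (w.r.t. degree bound `d`): `ψ_F` vanishes on `J_ℤ^d`. -/
def IsSKE (n d : ℕ) {R : Type*} [CommRing R] (F : Fin n → MvPolynomial (Fin n) R) : Prop :=
  ∀ Q ∈ Jzd n d, psi d F Q = 0

/-- `F` is a strong Keller map: for some degree bound `d ≥ 2` of `F`,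
`ψ_F` vanishes on `J_ℤ^d`. -/
def IsSKEAll (n : ℕ) {R : Type*} [CommRing R] (F : Fin n → MvPolynomial (Fin n) R) : Prop :=
  ∃ d, 2 ≤ d ∧ DegLE F d ∧ IsSKE n d F



section AuxProofs

open MvPolynomial

lemma apply_le_mdeg {n : ℕ} (β : Fin n →₀ ℕ) (i : Fin n) : β i ≤ mdeg β := by
  rcases eq_or_ne (β i) 0 with h | h
  · simp [h]
  · exact Finset.single_le_sum (fun _ _ => Nat.zero_le _) (Finsupp.mem_support_iff.mpr h)

lemma mem_midxSet {n d : ℕ} {β : Fin n →₀ ℕ} :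
    β ∈ midxSet n d ↔ 2 ≤ mdeg β ∧ mdeg β ≤ d := by
  constructor
  · intro h
    exact (Finset.mem_filter.mp h).2
  · intro h
    refine Finset.mem_filter.mpr ⟨Finset.mem_Iic.mpr ?_, h⟩
    intro i
    simpa using (apply_le_mdeg β i).trans h.2

lemma mdeg_single {n : ℕ} (i : Fin n) : mdeg (Finsupp.single i 1) = 1 := by
  simp [mdeg, Finsupp.sum_single_index]

lemma jacDet_map {n : ℕ} {R S : Type*} [CommRing R] [CommRing S] (f : R →+* S)
    (G : Fin n → MvPolynomial (Fin n) R) :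
    jacDet (fun i => MvPolynomial.map f (G i)) = MvPolynomial.map f (jacDet G) := by
  rw [jacDet, jacDet, RingHom.map_det]
  congr 1
  ext i j
  simp [Matrix.map_apply, pderiv_map]

lemma map_univFZ {n d : ℕ} {R : Type*} [CommRing R]
    (F : Fin n → MvPolynomial (Fin n) R) (hdeg : DegLE F d) (haff : AffinePartId F)
    (i : Fin n) : MvPolynomial.map (psi d F) (univFZ n d i) = F i := by
  ext β
  rw [coeff_map]
  have hXi : psi d F ((univFZ n d i).coeff β)
      = coeff β (X i : MvPolynomial (Fin n) R)
        + (if β ∈ midxSet n d then coeff β (F i) else 0) := by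
    rw [univFZ, coeff_add, map_add]
    congr 1
    · rw [coeff_X', coeff_X']
      split <;> simp
    · rw [coeff_sum, map_sum,
        ← Finset.sum_ite_eq' (midxSet n d) β (fun _ => coeff β (F i)),
        ← Finset.sum_attach (midxSet n d)
          (fun α => if α = β then coeff β (F i) else (0 : R))]
      refine Finset.sum_congr rfl fun α _ => ?_
      rw [coeff_monomial, apply_ite (psi d F), map_zero]
      rcases eq_or_ne (α : Fin n →₀ ℕ) β with hh | hh
      · rw [if_pos hh, if_pos hh]
        simp [psi, hh]
      · rw [if_neg hh, if_neg hh]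
  rw [hXi]
  by_cases h2 : 2 ≤ mdeg β
  · have hX0 : coeff β (X i : MvPolynomial (Fin n) R) = 0 := by
      rw [coeff_X']
      split
      · next h => exfalso; rw [← h, mdeg_single] at h2; omega
      · rfl
    by_cases hdb : mdeg β ≤ d
    · rw [if_pos (mem_midxSet.mpr ⟨h2, hdb⟩), hX0, zero_add]
    · rw [if_neg (fun h => hdb (mem_midxSet.mp h).2), hX0, zero_add]
      refine (coeff_eq_zero_of_totalDegree_lt ?_).symm
      calc (F i).totalDegree ≤ d := hdeg i
        _ < mdeg β := by omega
  · rw [if_neg (fun h => h2 (mem_midxSet.mp h).1), add_zero]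
    exact (haff i β (by omega)).symm

lemma psi_Ecoef {n d : ℕ} {R : Type*} [CommRing R]
    (F : Fin n → MvPolynomial (Fin n) R) (hdeg : DegLE F d) (haff : AffinePartId F)
    (β : Fin n →₀ ℕ) :
    psi d F (Ecoef n d β) = coeff β (jacDet F - 1) := by
  rw [Ecoef, ← coeff_map, map_sub, map_one]
  congr 2
  rw [← jacDet_map (psi d F) (univFZ n d)]
  congr 1
  funext i
  exact map_univFZ F hdeg haff i

end AuxProofs

/-- Over an integral domain of characteristic zero, a polynomial map of
degree ≤ d with affine part identity is a strong Keller map iff `det(Jac(F)) = 1`. -/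
theorem isSKE_iff_jacDet_eq_one_of_charZero (n d : ℕ) (hn : 1 ≤ n) (hd : 2 ≤ d)
    (R : Type*) [CommRing R] [IsDomain R] [CharZero R]
    (F : Fin n → MvPolynomial (Fin n) R) (hdeg : DegLE F d) (haff : AffinePartId F) :
    IsSKE n d F ↔ jacDet F = 1 := by
  constructor
  · intro h
    have hz : jacDet F - 1 = 0 := by
      apply MvPolynomial.ext
      intro β
      rw [coeff_zero, ← psi_Ecoef F hdeg haff β]
      apply h
      rw [Jzd, Ideal.mem_comap]
      exact Ideal.le_radical (Ideal.subset_span ⟨β, rfl⟩)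
    linear_combination hz
  · intro h Q hQ
    set K := FractionRing R
    haveI : CharZero K := charZero_of_injective_algebraMap
      (IsFractionRing.injective R K)
    set φ : MvPolynomial (Idx n d) ℚ →+* K :=
      eval₂Hom (algebraMap ℚ K) (fun v => algebraMap R K (coeff v.2.1 (F v.1))) with hφ
    have hcomp : ∀ P : MvPolynomial (Idx n d) ℤ,
        φ (toQ n d P) = algebraMap R K (psi d F P) := by
      intro P
      rw [hφ, toQ, eval₂Hom_map_hom, psi, ← RingHom.comp_apply, comp_eval₂Hom]
      exact eval₂Hom_congr (RingHom.ext_int _ _) rfl rfl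
    have hker : Iqd n d ≤ RingHom.ker φ := by
      rw [Iqd, Ideal.span_le]
      rintro _ ⟨β, rfl⟩
      rw [SetLike.mem_coe, RingHom.mem_ker, hcomp, psi_Ecoef F hdeg haff, h,
        sub_self, coeff_zero, map_zero]
    have hrad : toQ n d Q ∈ (Iqd n d).radical := hQ
    obtain ⟨k, hk⟩ := Ideal.mem_radical_iff.mp hrad
    have hφk : (φ (toQ n d Q)) ^ k = 0 := by
      rw [← map_pow]; exact hker hk
    have hφ0 : φ (toQ n d Q) = 0 := by
      rcases Nat.eq_zero_or_pos k with rfl | hkpos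
      · simp at hφk
      · exact pow_eq_zero_iff hkpos.ne' |>.mp hφk
    rw [hcomp] at hφ0
    exact IsFractionRing.injective R K (by rw [hφ0, map_zero])


end
end

section
/- Fix n ≥ 1 and a prime p, and let Ω be an algebraic closure of the field of fractions of 𝔽_p[x_i : i ∈ ℕ]. If every strong Keller map in ME_n(Ω) is invertible over Ω, then for every field k of characteristic p, every strong Keller map in ME_n(k) is invertible over k. -/
open MvPolynomial

noncomputable section

/-- `Ω`: an algebraic closure of the fraction field of `𝔽_p[x_i : i ∈ ℕ]`. -/
abbrev Omeg (p : ℕ) [Fact p.Prime] : Type :=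
  AlgebraicClosure (FractionRing (MvPolynomial ℕ (ZMod p)))


/-! ### Auxiliary lemmas -/

section AuxLemmas

lemma mdeg_zero' {n : ℕ} : mdeg (0 : Fin n →₀ ℕ) = 0 := by simp [mdeg]

lemma mdeg_add {n : ℕ} (a b : Fin n →₀ ℕ) : mdeg (a + b) = mdeg a + mdeg b := by
  simp [mdeg, Finsupp.sum_add_index']

lemma mdeg_eq_zero_iff {n : ℕ} {a : Fin n →₀ ℕ} : mdeg a = 0 ↔ a = 0 := by
  constructor
  · intro h
    rw [mdeg, Finsupp.sum, Finset.sum_eq_zero_iff] at h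
    ext i
    by_cases hi : i ∈ a.support
    · exact h i hi
    · simpa using Finsupp.notMem_support_iff.1 hi
  · intro h; simp [h, mdeg_zero']

lemma coeff_multiset_prod_eq_zero {n : ℕ} {R : Type*} [CommRing R]
    (t : Multiset (MvPolynomial (Fin n) R))
    (h0 : ∀ p ∈ t, constantCoeff p = 0) {β : Fin n →₀ ℕ}
    (hβ : mdeg β < Multiset.card t) : coeff β t.prod = 0 := by
  induction t using Multiset.induction generalizing β with
  | empty => simp at hβ
  | cons p t ih =>
    rw [Multiset.prod_cons, coeff_mul]
    refine Finset.sum_eq_zero fun x hx => ?_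
    have hsum := Finset.HasAntidiagonal.mem_antidiagonal.1 hx
    rcases eq_or_ne x.1 0 with h | h
    · have : coeff 0 p = 0 := h0 p (Multiset.mem_cons_self _ _)
      rw [h, this, zero_mul]
    · have h1 : 1 ≤ mdeg x.1 := Nat.pos_of_ne_zero (fun hc => h (mdeg_eq_zero_iff.1 hc))
      have h2 : mdeg x.1 + mdeg x.2 = mdeg β := by rw [← mdeg_add, hsum]
      rw [Multiset.card_cons] at hβ
      rw [ih (fun q hq => h0 q (Multiset.mem_cons_of_mem hq)) (by omega), mul_zero]

lemma coeff_multiset_prod_mem {n : ℕ} {R : Type*} [CommRing R] (S : Subring R) (m : ℕ)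
    (t : Multiset (MvPolynomial (Fin n) R))
    (h0 : ∀ p ∈ t, constantCoeff p = 0)
    (hS : ∀ p ∈ t, ∀ γ, mdeg γ < m → coeff γ p ∈ S)
    {β : Fin n →₀ ℕ} (hβ : mdeg β + 2 ≤ m + Multiset.card t) :
    coeff β t.prod ∈ S := by
  induction t using Multiset.induction generalizing β with
  | empty =>
    rw [Multiset.prod_zero, MvPolynomial.coeff_one]
    split
    · exact S.one_mem
    · exact S.zero_mem
  | cons p t ih =>
    rw [Multiset.prod_cons, coeff_mul]
    refine Subring.sum_mem _ fun x hx => ?_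
    have hsum := Finset.HasAntidiagonal.mem_antidiagonal.1 hx
    rcases eq_or_ne x.1 0 with h | h
    · have : coeff 0 p = 0 := h0 p (Multiset.mem_cons_self _ _)
      rw [h, this, zero_mul]; exact S.zero_mem
    · have h1 : 1 ≤ mdeg x.1 := Nat.pos_of_ne_zero (fun hc => h (mdeg_eq_zero_iff.1 hc))
      have h2 : mdeg x.1 + mdeg x.2 = mdeg β := by rw [← mdeg_add, hsum]
      rw [Multiset.card_cons] at hβ
      rcases lt_or_ge (mdeg x.2) (Multiset.card t) with h3 | h3
      · rw [coeff_multiset_prod_eq_zero t (fun q hq => h0 q (Multiset.mem_cons_of_mem hq)) h3,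
          mul_zero]
        exact S.zero_mem
      · refine S.mul_mem ?_ (ih (fun q hq => h0 q (Multiset.mem_cons_of_mem hq))
          (fun q hq γ hγ => hS q (Multiset.mem_cons_of_mem hq) γ hγ) (by omega))
        exact hS p (Multiset.mem_cons_self _ _) x.1 (by omega)

lemma coeff_bind₁_mem {n : ℕ} {R : Type*} [CommRing R] (S : Subring R) (m : ℕ)
    (G : Fin n → MvPolynomial (Fin n) R)
    (hG0 : ∀ j, constantCoeff (G j) = 0)
    (hGS : ∀ j γ, mdeg γ < m → coeff γ (G j) ∈ S)
    (Q : MvPolynomial (Fin n) R)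
    (hQS : ∀ γ, coeff γ Q ∈ S)
    (hQ2 : ∀ γ, mdeg γ ≤ 1 → coeff γ Q = 0)
    {β : Fin n →₀ ℕ} (hβ : mdeg β ≤ m) :
    coeff β (bind₁ G Q) ∈ S := by
  rw [bind₁, aeval_def, eval₂_eq]
  rw [coeff_sum]
  refine Subring.sum_mem _ fun γ hγ => ?_
  have h2 : 2 ≤ mdeg γ := by
    by_contra hc
    exact (mem_support_iff.1 hγ) (hQ2 γ (by omega))
  rw [MvPolynomial.algebraMap_eq, coeff_C_mul]
  refine S.mul_mem (hQS γ) ?_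
  have hprod : (∏ i ∈ γ.support, G i ^ γ i) = (Multiset.map G γ.toMultiset).prod := by
    rw [Finsupp.toMultiset_map, Finsupp.prod_toMultiset,
      Finsupp.prod_mapDomain_index (by simp) (fun b m₁ m₂ => pow_add _ _ _)]
    rfl
  rw [hprod]
  refine coeff_multiset_prod_mem S m _ ?_ ?_ ?_
  · intro p hp
    obtain ⟨j, _, rfl⟩ := Multiset.mem_map.1 hp
    exact hG0 j
  · intro p hp δ hδ
    obtain ⟨j, _, rfl⟩ := Multiset.mem_map.1 hp
    exact hGS j δ hδ
  · rw [Multiset.card_map, Finsupp.card_toMultiset]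
    have : (γ.sum fun _ => id) = mdeg γ := rfl
    omega

lemma exists_map_eq {n : ℕ} {K R : Type*} [CommRing K] [CommRing R] (σ : K →+* R)
    (q : MvPolynomial (Fin n) R) (h : ∀ β, coeff β q ∈ σ.range) :
    ∃ q₀ : MvPolynomial (Fin n) K, map σ q₀ = q := by
  have h' : ∀ β, ∃ x, σ x = coeff β q := fun β => RingHom.mem_range.1 (h β)
  choose g hg using h'
  refine ⟨∑ β ∈ q.support, monomial β (g β), ?_⟩
  rw [map_sum]
  simp only [map_monomial, hg]
  exact support_sum_monomial_coeff q

/-- **Descent of invertibility** along an injective ring hom, for endomorphisms with affine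
part the identity. -/
lemma descend_invertible {n : ℕ} {K R : Type*} [CommRing K] [CommRing R]
    (σ : K →+* R) (hσ : Function.Injective ⇑σ)
    (F : Fin n → MvPolynomial (Fin n) K) (hF : AffinePartId F)
    (h : IsInvertible fun i => map σ (F i)) : IsInvertible F := by
  obtain ⟨G, hGF, hFG⟩ := h
  set S : Subring R := σ.range with hSdef
  have hF0 : ∀ j, constantCoeff (map σ (F j)) = 0 := by
    intro j
    have h1 := hF j 0 (by rw [mdeg_zero']; omega)
    have : constantCoeff (F j) = 0 := by
      rw [show (constantCoeff (F j) : K) = coeff 0 (F j) from rfl, h1]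
      simp [coeff_X]
    rw [constantCoeff_map, this, map_zero]
  have hG0 : ∀ i, constantCoeff (G i) = 0 := by
    intro i
    have h1 := congrArg constantCoeff (hFG i)
    rw [MvPolynomial.hom_bind₁, constantCoeff_X] at h1
    rw [MvPolynomial.constantCoeff_comp_C] at h1
    rw [show eval₂Hom (RingHom.id R) (fun j => constantCoeff ((fun i => map σ (F i)) j)) (G i)
        = eval (fun j => constantCoeff (map σ (F j))) (G i) from rfl] at h1
    rw [show (fun j => constantCoeff (map σ (F j))) = (0 : Fin n → R) from funext fun j => hF0 j,
      MvPolynomial.eval_zero] at h1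
    exact h1
  set H : Fin n → MvPolynomial (Fin n) R := fun i => map σ (F i) - X i with hHdef
  have hHmap : ∀ i, H i = map σ (F i - X i) := by
    intro i; rw [hHdef]; simp [MvPolynomial.map_X]
  have hHS : ∀ i γ, coeff γ (H i) ∈ S := by
    intro i γ; rw [hHmap, coeff_map]; exact ⟨_, rfl⟩
  have hH2 : ∀ i γ, mdeg γ ≤ 1 → coeff γ (H i) = 0 := by
    intro i γ hγ
    rw [hHmap, coeff_map, coeff_sub, hF i γ hγ, sub_self, map_zero]
  have hrec : ∀ i, G i = X i - bind₁ G (H i) := by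
    intro i
    have h1 : bind₁ G (map σ (F i)) = X i := hGF i
    have h2 : map σ (F i) = X i + H i := by rw [hHdef]; ring
    rw [h2, map_add, bind₁_X_right] at h1
    rw [← h1]; ring
  have key : ∀ (N : ℕ) i (β : Fin n →₀ ℕ), mdeg β < N → coeff β (G i) ∈ S := by
    intro N
    induction N with
    | zero => intro i β h; omega
    | succ N ih =>
      intro i β hβ
      rw [hrec i, coeff_sub]
      refine S.sub_mem ?_ ?_
      · rw [show (X i : MvPolynomial (Fin n) R) = map σ (X i) from (MvPolynomial.map_X σ i).symm,
          coeff_map]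
        exact ⟨_, rfl⟩
      · exact coeff_bind₁_mem S N G hG0 (fun j γ hγ => ih j γ hγ) (H i) (hHS i) (hH2 i)
          (by omega)
  have hGrange : ∀ i, ∃ q₀, map σ q₀ = G i := by
    intro i
    exact exists_map_eq σ (G i) (fun β => key (mdeg β + 1) i β (by omega))
  choose G₀ hG₀ using hGrange
  have hmapinj : Function.Injective (map σ : MvPolynomial (Fin n) K → MvPolynomial (Fin n) R) :=
    MvPolynomial.map_injective σ hσ
  refine ⟨G₀, fun i => hmapinj ?_, fun i => hmapinj ?_⟩
  · rw [MvPolynomial.map_bind₁]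
    simp only [hG₀]
    rw [hGF i, MvPolynomial.map_X]
  · rw [MvPolynomial.map_bind₁, hG₀]
    rw [hFG i, MvPolynomial.map_X]

lemma psi_map {n d : ℕ} {K R : Type*} [CommRing K] [CommRing R] (σ : K →+* R)
    (F : Fin n → MvPolynomial (Fin n) K) (Q : MvPolynomial (Idx n d) ℤ) :
    psi d (fun i => map σ (F i)) Q = σ (psi d F Q) := by
  have h : (psi d (fun i => map σ (F i)) : MvPolynomial (Idx n d) ℤ →+* R) =
      σ.comp (psi d F) := by
    apply MvPolynomial.ringHom_ext
    · intro z
      simp [psi]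
    · intro v
      simp [psi, coeff_map]
  rw [h, RingHom.comp_apply]

lemma totalDegree_map_le' {n : ℕ} {K R : Type*} [CommRing K] [CommRing R] (σ : K →+* R)
    (q : MvPolynomial (Fin n) K) : (map σ q).totalDegree ≤ q.totalDegree :=
  Finset.sup_mono (MvPolynomial.support_map_subset _ _)

lemma totalDegree_map_eq' {n : ℕ} {K R : Type*} [CommRing K] [CommRing R] {σ : K →+* R}
    (hσ : Function.Injective ⇑σ) (q : MvPolynomial (Fin n) K) :
    (map σ q).totalDegree = q.totalDegree := by
  unfold totalDegree
  rw [MvPolynomial.support_map_of_injective _ hσ]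

lemma map_invertible {n : ℕ} {K R : Type*} [CommRing K] [CommRing R] (σ : K →+* R)
    (F : Fin n → MvPolynomial (Fin n) K) (h : IsInvertible F) :
    IsInvertible fun i => map σ (F i) := by
  obtain ⟨G, hGF, hFG⟩ := h
  refine ⟨fun i => map σ (G i), fun i => ?_, fun i => ?_⟩
  · rw [← MvPolynomial.map_bind₁, hGF i, MvPolynomial.map_X]
  · rw [← MvPolynomial.map_bind₁, hFG i, MvPolynomial.map_X]

/-- Promote a ring hom between `ZMod p`-algebras to an algebra hom. -/
def zmodAlgHom {p : ℕ} {A B : Type*} [CommRing A] [CommRing B]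
    [Algebra (ZMod p) A] [Algebra (ZMod p) B] (f : A →+* B) : A →ₐ[ZMod p] B :=
  { f with
    commutes' := fun r =>
      RingHom.congr_fun (RingHom.ext_zmod (f.comp (algebraMap (ZMod p) A))
        (algebraMap (ZMod p) B)) r }

lemma zmodAlgHom_coe {p : ℕ} {A B : Type*} [CommRing A] [CommRing B]
    [Algebra (ZMod p) A] [Algebra (ZMod p) B] (f : A →+* B) :
    ⇑(zmodAlgHom (p := p) f) = ⇑f := rfl

set_option synthInstance.maxHeartbeats 1000000 in
set_option maxHeartbeats 4000000 in
/-- Any countable field of characteristic `p` embeds into `Ω`. -/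
lemma exists_embedding_Omeg (p : ℕ) [Fact p.Prime] (K : Type*) [Field K] [Countable K]
    [Algebra (ZMod p) K] : ∃ σ : K →+* Omeg p, Function.Injective ⇑σ := by
  classical
  set M := MvPolynomial ℕ (ZMod p) with hM
  have hc : CharP (Omeg p) p := by
    have : Function.Injective ⇑((algebraMap (FractionRing M) (Omeg p)).comp
        ((algebraMap M (FractionRing M)).comp (algebraMap (ZMod p) M))) :=
      RingHom.injective _
    exact charP_of_injective_ringHom this p
  letI : Algebra (ZMod p) (Omeg p) := ZMod.algebra _ p
  have hcF : CharP (FractionRing M) p := by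
    have : Function.Injective ⇑((algebraMap M (FractionRing M)).comp (algebraMap (ZMod p) M)) :=
      RingHom.injective _
    exact charP_of_injective_ringHom this p
  letI : Algebra (ZMod p) (FractionRing M) := ZMod.algebra _ p
  have hX := MvPolynomial.algebraicIndependent_X ℕ (ZMod p)
  have h1 : AlgebraicIndependent (ZMod p)
      ((zmodAlgHom (p := p) (algebraMap M (FractionRing M))) ∘ X) :=
    hX.map' (by rw [zmodAlgHom_coe]; exact IsFractionRing.injective M (FractionRing M))
  have h2 : AlgebraicIndependent (ZMod p)
      ((zmodAlgHom (p := p) (algebraMap (FractionRing M) (Omeg p))) ∘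
        ((zmodAlgHom (p := p) (algebraMap M (FractionRing M))) ∘ X)) :=
    h1.map' (by rw [zmodAlgHom_coe]; exact RingHom.injective _)
  obtain ⟨s, hs⟩ := by
    haveI : FaithfulSMul (ZMod p) K := (faithfulSMul_iff_algebraMap_injective (ZMod p) K).mpr
      (show Function.Injective ⇑(algebraMap (ZMod p) K) from RingHom.injective _)
    exact exists_isTranscendenceBasis (ZMod p) K
  obtain ⟨e, he⟩ := exists_injective_nat s
  have hw : AlgebraicIndependent (ZMod p)
      (((zmodAlgHom (p := p) (algebraMap (FractionRing M) (Omeg p))) ∘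
        ((zmodAlgHom (p := p) (algebraMap M (FractionRing M))) ∘ X)) ∘ e) :=
    h2.comp e he
  set w : s → Omeg p := ((zmodAlgHom (p := p) (algebraMap (FractionRing M) (Omeg p))) ∘
        ((zmodAlgHom (p := p) (algebraMap M (FractionRing M))) ∘ X)) ∘ e with hwdef
  set R₀ := Algebra.adjoin (ZMod p) (Set.range ((↑) : s → K)) with hR₀
  haveI halg : Algebra.IsAlgebraic R₀ K := hs.isAlgebraic
  set ρ : R₀ →+* Omeg p := ((aeval w).toRingHom.comp hs.1.repr.toRingHom) with hρ
  have hρinj : Function.Injective ⇑ρ := by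
    rw [hρ, RingHom.coe_comp]
    exact Function.Injective.comp hw (AlgEquiv.injective _)
  letI : Algebra R₀ (Omeg p) := ρ.toAlgebra
  haveI : Module.IsTorsionFree R₀ (Omeg p) :=
    Module.isTorsionFree_iff_algebraMap_injective.mpr hρinj
  haveI : Module.IsTorsionFree R₀ K :=
    Module.isTorsionFree_iff_algebraMap_injective.mpr Subtype.coe_injective
  exact ⟨(IsAlgClosed.lift (M := Omeg p) (R := R₀) (S := K)).toRingHom, RingHom.injective _⟩

set_option synthInstance.maxHeartbeats 1000000 in
set_option maxHeartbeats 4000000 in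
/-- Given a field `k` of char `p` and countably many elements `a : I → k`, there is a countable
field `K` of char `p` together with an injective hom `σ : K →+* k` whose range contains all
the `a v`. -/
lemma exists_countable_subfield (p : ℕ) [Fact p.Prime] (k : Type) [Field k] [CharP k p]
    {I : Type} [Countable I] (a : I → k) :
    ∃ (K : Type) (_ : Field K) (_ : Countable K) (_ : Algebra (ZMod p) K)
      (σ : K →+* k), Function.Injective ⇑σ ∧ ∀ v, a v ∈ σ.range := by
  classical
  letI : Algebra (ZMod p) k := ZMod.algebra _ p
  set φ : MvPolynomial I (ZMod p) →+* k := (MvPolynomial.aeval a).toRingHom with hφ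
  set D := MvPolynomial I (ZMod p) ⧸ RingHom.ker φ with hD
  haveI : (RingHom.ker φ).IsPrime := RingHom.ker_isPrime φ
  haveI : IsDomain D := Ideal.Quotient.isDomain _
  set K := FractionRing D with hK
  haveI : Countable (MvPolynomial I (ZMod p)) :=
    (AddMonoidAlgebra.coeffEquiv (R := ZMod p) (M := I →₀ ℕ)).injective.countable
  haveI : Countable D := Quotient.countable
  haveI : Countable K := by
    have hsur : Function.Surjective
        (fun x : D × D => algebraMap D K x.1 / algebraMap D K x.2) := by
      intro z
      obtain ⟨x, y, _, h⟩ := IsFractionRing.div_surjective (A := D) z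
      exact ⟨(x, y), h⟩
    exact hsur.countable
  letI : Algebra (ZMod p) K :=
    ((algebraMap D K).comp (algebraMap (ZMod p) D)).toAlgebra
  set σ : K →+* k := IsFractionRing.lift (g := φ.kerLift) (RingHom.kerLift_injective φ) with hσ
  refine ⟨K, inferInstance, inferInstance, inferInstance, σ, RingHom.injective σ, fun v => ?_⟩
  refine ⟨algebraMap D K (Ideal.Quotient.mk _ (X v)), ?_⟩
  rw [hσ, IsFractionRing.lift_algebraMap, RingHom.kerLift_mk]
  simp [hφ]

end AuxLemmas

/-- If every strong Keller map over `Ω` is invertible, then for every field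
`k` of characteristic `p`, every strong Keller map over `k` is invertible. -/
theorem jc_over_Omega_implies_jc_over_all_charP_fields (n p : ℕ) (hn : 1 ≤ n) [Fact p.Prime]
    (H : ∀ F : Fin n → MvPolynomial (Fin n) (Omeg p),
      AffinePartId F → IsSKEAll n F → IsInvertible F) :
    ∀ (k : Type) [Field k] [CharP k p],
      ∀ F : Fin n → MvPolynomial (Fin n) k, AffinePartId F → IsSKEAll n F → IsInvertible F := by
  intro k _ _ F hAff hSKE
  obtain ⟨d, hd2, hdeg, hske⟩ := hSKE
  obtain ⟨K, _, _, _, σ₁, hσ₁, hrange⟩ := exists_countable_subfield p k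
    (fun v : Fin n × (Fin n →₀ ℕ) => MvPolynomial.coeff v.2 (F v.1))
  obtain ⟨σ₂, hσ₂⟩ := exists_embedding_Omeg p K
  choose F₀ hF₀ using fun i => exists_map_eq σ₁ (F i) (fun β => hrange (i, β))
  have hFfun : (fun i => map σ₁ (F₀ i)) = F := funext hF₀
  have hAff₀ : AffinePartId F₀ := by
    intro i α hα
    apply hσ₁
    rw [← coeff_map, hF₀ i, hAff i α hα,
      show (X i : MvPolynomial (Fin n) k) = map σ₁ (X i) from (MvPolynomial.map_X σ₁ i).symm,
      coeff_map]
  have hdeg₀ : DegLE F₀ d := by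
    intro i
    rw [← totalDegree_map_eq' hσ₁ (F₀ i), hF₀ i]
    exact hdeg i
  have hske₀ : IsSKE n d F₀ := by
    intro Q hQ
    have h1 : psi d (fun i => map σ₁ (F₀ i)) Q = 0 := by
      rw [hFfun]; exact hske Q hQ
    rw [psi_map] at h1
    apply hσ₁
    rw [h1, map_zero]
  have hAff₁ : AffinePartId (fun i => map σ₂ (F₀ i)) := by
    intro i α hα
    rw [coeff_map, hAff₀ i α hα,
      show (X i : MvPolynomial (Fin n) (Omeg p)) = map σ₂ (X i) from
        (MvPolynomial.map_X σ₂ i).symm,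
      coeff_map]
  have hske₁ : IsSKEAll n (fun i => map σ₂ (F₀ i)) := by
    refine ⟨d, hd2, fun i => le_trans (totalDegree_map_le' σ₂ (F₀ i)) (hdeg₀ i), fun Q hQ => ?_⟩
    rw [psi_map, hske₀ Q hQ, map_zero]
  have hinv₁ : IsInvertible (fun i => map σ₂ (F₀ i)) := H _ hAff₁ hske₁
  have hinv₀ : IsInvertible F₀ := descend_invertible σ₂ hσ₂ F₀ hAff₀ hinv₁
  have hfin := map_invertible σ₁ F₀ hinv₀
  rwa [hFfun] at hfin


end
end

section
/- Assume Conjecture 2. Let k be a countable field of characteristic p, let Λ = ℤ[x₁, x₂, …], and let τ : Λ → k be a surjective ring homomorphism with induced map π on polynomial endomorphisms. Then a map f ∈ ME_n(k) with affine part identity is a strong Keller map over k if and only if f = π(F) for some F ∈ ME_n(Λ) with affine part identity and det(Jac(F)) = 1. -/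
open MvPolynomial

noncomputable section

/-- **Conjecture 1(1).** For every ℤ-algebra `R`, field `k` and surjective `τ : R → k`,
every invertible polynomial map over `k` with Jacobian determinant 1 lifts along `π` to an
invertible polynomial map over `R` with Jacobian determinant 1. -/
def Conj1_1 : Prop :=
  ∀ (n : ℕ), 1 ≤ n →
  ∀ (R : Type) [CommRing R], ∀ (k : Type) [Field k],
  ∀ (τ : R →+* k), Function.Surjective τ →
  ∀ f : Fin n → MvPolynomial (Fin n) k, IsInvertible f → jacDet f = 1 →
    ∃ F : Fin n → MvPolynomial (Fin n) R, IsInvertible F ∧ jacDet F = 1 ∧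
      ∀ i, MvPolynomial.map τ (F i) = f i

/-- **Conjecture 1(2).** For every ℤ-algebra `R`, field `k` and surjective `τ : R → k`,
every Keller map `F` over `R` whose image `π(F)` is invertible over `k` with Jacobian
determinant 1 is itself invertible over `R`. -/
def Conj1_2 : Prop :=
  ∀ (n : ℕ), 1 ≤ n →
  ∀ (R : Type) [CommRing R], ∀ (k : Type) [Field k],
  ∀ (τ : R →+* k), Function.Surjective τ →
  ∀ F : Fin n → MvPolynomial (Fin n) R, jacDet F = 1 →
    IsInvertible (fun i => MvPolynomial.map τ (F i)) →
    jacDet (fun i => MvPolynomial.map τ (F i)) = 1 →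
    IsInvertible F

/-- **Conjecture 2.** For every ℤ-algebra `R`, field `k` of characteristic `p`, and
surjective `τ : R → k`, every strong Keller map over `k` with affine part identity is the
image under `π` of a polynomial map over `R` with affine part identity and Jacobian
determinant 1. -/
def Conj2 : Prop :=
  ∀ (n : ℕ), 1 ≤ n →
  ∀ (R : Type) [CommRing R], ∀ (k : Type) [Field k], ∀ (p : ℕ), p.Prime → CharP k p →
  ∀ (τ : R →+* k), Function.Surjective τ →
  ∀ f : Fin n → MvPolynomial (Fin n) k, AffinePartId f → IsSKEAll n f →
    ∃ F : Fin n → MvPolynomial (Fin n) R, AffinePartId F ∧ jacDet F = 1 ∧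
      ∀ i, MvPolynomial.map τ (F i) = f i


namespace SKEaux
open MvPolynomial

variable {n d : ℕ} {R S : Type*} [CommRing R] [CommRing S]

lemma jacDet_map (φ : R →+* S) (F : Fin n → MvPolynomial (Fin n) R) :
    jacDet (fun i => MvPolynomial.map φ (F i)) = MvPolynomial.map φ (jacDet F) := by
  unfold jacDet
  rw [RingHom.map_det]
  congr 1
  ext i j
  simp [MvPolynomial.pderiv_map]

lemma psi_map (φ : R →+* S) (F : Fin n → MvPolynomial (Fin n) R) :
    psi d (fun i => MvPolynomial.map φ (F i)) = φ.comp (psi d F) := by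
  apply MvPolynomial.ringHom_ext
  · intro a
    simp [psi]
  · intro v
    simp [psi, MvPolynomial.coeff_map]

lemma mem_midxSet {β : Fin n →₀ ℕ} (h2 : 2 ≤ mdeg β) (hd : mdeg β ≤ d) :
    β ∈ midxSet n d := by
  refine Finset.mem_filter.mpr ⟨Finset.mem_Iic.mpr ?_, h2, hd⟩
  intro j
  simp only [Finsupp.coe_equivFunOnFinite_symm]
  refine le_trans ?_ hd
  by_cases hj : β j = 0
  · simp [hj]
  · have : j ∈ β.support := Finsupp.mem_support_iff.mpr hj
    calc β j ≤ ∑ a ∈ β.support, β a :=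
          Finset.single_le_sum (f := fun a => β a) (fun _ _ => Nat.zero_le _) this
      _ = mdeg β := rfl

lemma not_mem_midxSet_of_small {β : Fin n →₀ ℕ} (h : mdeg β ≤ 1) :
    β ∉ midxSet n d := by
  intro hmem
  have := (Finset.mem_filter.mp hmem).2.1
  omega

lemma not_mem_midxSet_of_big {β : Fin n →₀ ℕ} (h : d < mdeg β) :
    β ∉ midxSet n d := by
  intro hmem
  have := (Finset.mem_filter.mp hmem).2.2
  omega

lemma expand_of_affine (F : Fin n → MvPolynomial (Fin n) R)
    (haff : AffinePartId F) (hdeg : DegLE F d) (i : Fin n) :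
    F i = MvPolynomial.X i +
      ∑ α ∈ midxSet n d, MvPolynomial.monomial α (MvPolynomial.coeff α (F i)) := by
  apply MvPolynomial.ext
  intro β
  rw [MvPolynomial.coeff_add, MvPolynomial.coeff_sum]
  simp only [MvPolynomial.coeff_monomial]
  rw [Finset.sum_ite_eq' (midxSet n d) β (fun β => MvPolynomial.coeff β (F i))]
  by_cases h1 : mdeg β ≤ 1
  · rw [if_neg (not_mem_midxSet_of_small h1), haff i β h1, add_zero]
  · push_neg at h1
    have hX : MvPolynomial.coeff β (MvPolynomial.X i : MvPolynomial (Fin n) R) = 0 := by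
      rw [MvPolynomial.coeff_X']
      rw [if_neg]
      intro hEq
      rw [← hEq] at h1
      simp [mdeg] at h1
    by_cases h2 : mdeg β ≤ d
    · rw [if_pos (mem_midxSet h1 h2), hX, zero_add]
    · push_neg at h2
      rw [if_neg (not_mem_midxSet_of_big h2), hX, zero_add]
      by_contra hne
      have hsupp : β ∈ (F i).support := MvPolynomial.mem_support_iff.mpr hne
      have := MvPolynomial.le_totalDegree hsupp
      have := hdeg i
      simp only [mdeg] at h2
      omega

lemma map_psi_univFZ (F : Fin n → MvPolynomial (Fin n) R)
    (haff : AffinePartId F) (hdeg : DegLE F d) (i : Fin n) :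
    MvPolynomial.map (psi d F) (univFZ n d i) = F i := by
  rw [univFZ, map_add, MvPolynomial.map_X, map_sum]
  simp only [MvPolynomial.map_monomial]
  have : ∀ α ∈ (midxSet n d).attach,
      (MvPolynomial.monomial (α : Fin n →₀ ℕ))
        (psi d F (MvPolynomial.X (⟨i, ⟨α.1, by
          have h := α.2
          simp only [midxSet, Finset.mem_filter] at h
          exact h.2⟩⟩ : Idx n d)))
      = (MvPolynomial.monomial (α : Fin n →₀ ℕ)) (MvPolynomial.coeff α.1 (F i)) := by
    intro α _
    congr 1
    simp [psi]
  rw [Finset.sum_congr rfl this,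
    Finset.sum_attach (midxSet n d) (fun α => (MvPolynomial.monomial α) (MvPolynomial.coeff α (F i)))]
  exact (expand_of_affine F haff hdeg i).symm

lemma psi_Ecoef (F : Fin n → MvPolynomial (Fin n) R)
    (haff : AffinePartId F) (hdeg : DegLE F d) (hjac : jacDet F = 1)
    (β : Fin n →₀ ℕ) : psi d F (Ecoef n d β) = 0 := by
  rw [Ecoef, ← MvPolynomial.coeff_map, map_sub, map_one, ← jacDet_map]
  have : (fun i => MvPolynomial.map (psi d F) (univFZ n d i)) = F := by
    funext i; exact map_psi_univFZ F haff hdeg i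
  rw [this, hjac, sub_self, MvPolynomial.coeff_zero]

end SKEaux

/-- Assuming Conjecture 2: over a countable field `k` of characteristic
`p` with surjective `τ : Λ = ℤ[x₁,x₂,…] → k`, a polynomial map `f` with affine part
identity is a strong Keller map iff it is `π(F)` for some `F` over `Λ` with affine part
identity and `det(Jac(F)) = 1`. -/
theorem strong_keller_iff_lifts_to_keller (h2 : Conj2) (n p : ℕ) (hn : 1 ≤ n) (hp : p.Prime)
    (k : Type) [Field k] [Countable k] [CharP k p]
    (τ : MvPolynomial ℕ ℤ →+* k) (hτ : Function.Surjective τ)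
    (f : Fin n → MvPolynomial (Fin n) k) (haff : AffinePartId f) :
    IsSKEAll n f ↔
      ∃ F : Fin n → MvPolynomial (Fin n) (MvPolynomial ℕ ℤ),
        AffinePartId F ∧ jacDet F = 1 ∧ ∀ i, MvPolynomial.map τ (F i) = f i := by
  constructor
  · intro hske
    exact h2 n hn (MvPolynomial ℕ ℤ) k p hp inferInstance τ hτ f haff hske
  · rintro ⟨F, haffF, hjac, hmap⟩
    have hfeq : f = fun i => MvPolynomial.map τ (F i) := by
      funext i; exact (hmap i).symm
    set d := max 2 (Finset.univ.sup fun i => (F i).totalDegree) with hd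
    have hd2 : 2 ≤ d := le_max_left _ _
    have hdegF : DegLE F d := by
      intro i
      rw [hd]
      have h1 : (F i).totalDegree ≤ Finset.univ.sup fun j => (F j).totalDegree :=
        Finset.le_sup (f := fun j => (F j).totalDegree) (Finset.mem_univ i)
      exact le_trans h1 (le_max_right _ _)
    have hdegf : DegLE f d := by
      intro i
      rw [hfeq]
      refine le_trans ?_ (hdegF i)
      exact Finset.sup_mono (MvPolynomial.support_map_subset _ _)
    refine ⟨d, hd2, hdegf, ?_⟩
    intro Q hQ
    set ι : MvPolynomial ℕ ℤ →+* MvPolynomial ℕ ℚ :=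
      MvPolynomial.map (Int.castRingHom ℚ) with hι_def
    have hι : Function.Injective ι :=
      MvPolynomial.map_injective _ Int.cast_injective
    set ψ' : MvPolynomial (Idx n d) ℚ →+* MvPolynomial ℕ ℚ :=
      MvPolynomial.eval₂Hom (MvPolynomial.C)
        (fun v => ι (MvPolynomial.coeff v.2.1 (F v.1))) with hψ'_def
    have hcomp : ∀ x, ψ' (toQ n d x) = ι (psi d F x) := by
      intro x
      have hcc : ψ'.comp (toQ n d) = ι.comp (psi d F) := by
        apply MvPolynomial.ringHom_ext
        · intro a
          simp [toQ, psi, hψ'_def, hι_def, map_intCast]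
        · intro v
          simp [toQ, psi, hψ'_def]
      exact RingHom.congr_fun hcc x
    have hker : ∀ y ∈ Iqd n d, ψ' y = 0 := by
      intro y hy
      have hle : Iqd n d ≤ RingHom.ker ψ' := by
        refine Ideal.span_le.mpr ?_
        rintro _ ⟨β, rfl⟩
        simp only [SetLike.mem_coe, RingHom.mem_ker]
        rw [hcomp, SKEaux.psi_Ecoef F haffF hdegF hjac, map_zero]
      exact hle hy
    have hrad : toQ n d Q ∈ (Iqd n d).radical := hQ
    obtain ⟨m, hm⟩ := Ideal.mem_radical_iff.mp hrad
    have hpow : (ι (psi d F Q)) ^ m = 0 := by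
      rw [← hcomp, ← map_pow, hker _ hm]
    have hzero : psi d F Q = 0 := by
      apply hι
      rw [map_zero]
      exact IsNilpotent.eq_zero ⟨m, hpow⟩
    have hpsi : psi d f Q = τ (psi d F Q) := by
      rw [hfeq, SKEaux.psi_map]
      rfl
    rw [hpsi, hzero, map_zero]

end
end

section
/- Assume Conjecture 2. Suppose that for every n ≥ 1 and every integral domain R of characteristic zero, every Keller map in ME_n(R) is invertible over R. Then for every n ≥ 1, every prime p, and every field K of characteristic p, every strong Keller map in ME_n(K) is invertible over K. -/
open MvPolynomial

noncomputable section

/-- Assuming Conjecture 2: if the Jacobian Conjecture holds in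
characteristic zero (every Keller map over every characteristic-zero integral domain is
invertible, for every n ≥ 1), then every strong Keller map over every field of positive
characteristic is invertible. -/
theorem jc_char_zero_implies_jc_char_p (h2 : Conj2)
    (H0 : ∀ (n : ℕ), 1 ≤ n → ∀ (R : Type) [CommRing R] [IsDomain R] [CharZero R],
      ∀ F : Fin n → MvPolynomial (Fin n) R, jacDet F = 1 → IsInvertible F) :
    ∀ (n : ℕ), 1 ≤ n → ∀ (p : ℕ), p.Prime → ∀ (K : Type) [Field K], CharP K p →
      ∀ F : Fin n → MvPolynomial (Fin n) K,
        AffinePartId F → IsSKEAll n F → IsInvertible F := by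
  intro n hn p hp K _ hchar F haff hske
  set R := MvPolynomial K ℤ with hR
  let τ : R →+* K := MvPolynomial.eval₂Hom (Int.castRingHom K) id
  have hτ : Function.Surjective τ := fun a =>
    ⟨MvPolynomial.X a, MvPolynomial.eval₂Hom_X' (Int.castRingHom K) id a⟩
  obtain ⟨F', haff', hjac', hmap⟩ := h2 n hn R K p hp hchar τ hτ F haff hske
  obtain ⟨G', hGF, hFG⟩ := H0 n hn R F' hjac'
  have hF : F = fun i => MvPolynomial.map τ (F' i) := funext fun i => (hmap i).symm
  subst hF
  refine ⟨fun i => MvPolynomial.map τ (G' i), ?_, ?_⟩ <;> intro i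
  · have := congrArg (MvPolynomial.map τ) (hGF i)
    rwa [MvPolynomial.map_bind₁, MvPolynomial.map_X] at this
  · have := congrArg (MvPolynomial.map τ) (hFG i)
    rwa [MvPolynomial.map_bind₁, MvPolynomial.map_X] at this

end
end
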